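/- arXiv:1602.06042 — 3 statements merged into one kernel-verified Lean document; each statement's English description precedes it below -/
import Mathlib

section
/- Let z ∈ ℝ^p and let i_1, …, i_m be a greedy selection for z, with B_m = G_{i_1} ∪ ⋯ ∪ G_{i_m}. Then for every k ≥ 1 and every A ⊆ {1, …, M} with |A| ≤ k, Σ_{i ∈ B_m} z_i² ≥ (1 − e^{−m/k}) · Σ_{i ∈ ∪_{j∈A} G_j} z_i². -/
open Finset

noncomputable section

/-- The restriction of a vector to a coordinate set: agrees with `z` on `S`, zero off `S`. -/
def restrict {p : ℕ} (z : EuclideanSpace ℝ (Fin p)) (S : Finset (Fin p)) :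
    EuclideanSpace ℝ (Fin p) :=
  WithLp.toLp 2 (fun i => if i ∈ S then z i else 0)

open Classical in
/-- The support of a vector, as a finite set. -/
noncomputable def suppF {p : ℕ} (z : EuclideanSpace ℝ (Fin p)) : Finset (Fin p) :=
  Finset.univ.filter (fun i => z i ≠ 0)

/-- `w` is `k`-group-sparse w.r.t. the groups `G`. -/
def GroupSparse {p M : ℕ} (G : Fin M → Finset (Fin p)) (k : ℕ)
    (w : EuclideanSpace ℝ (Fin p)) : Prop :=
  ∃ A : Finset (Fin M), A.card ≤ k ∧ suppF w ⊆ A.biUnion G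

/-- `B_j`: the union of the first `j` selected groups. -/
def partialUnion {p M m : ℕ} (G : Fin M → Finset (Fin p)) (idx : Fin m → Fin M) (j : ℕ) :
    Finset (Fin p) :=
  (Finset.univ.filter (fun t : Fin m => (t : ℕ) < j)).biUnion (fun t => G (idx t))

/-- `idx` is a greedy selection for `z` (Algorithm 2 of the paper): at each step `j`,
the selected group maximizes the norm of `z` restricted to the yet-uncovered part. -/
def IsGreedySelection {p M m : ℕ} (G : Fin M → Finset (Fin p))
    (z : EuclideanSpace ℝ (Fin p)) (idx : Fin m → Fin M) : Prop :=
  ∀ j : Fin m, ∀ ℓ : Fin M,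
    ‖restrict z (G ℓ \ partialUnion G idx (j : ℕ))‖ ≤
      ‖restrict z (G (idx j) \ partialUnion G idx (j : ℕ))‖

/-- `w` is an exact projection of `z` onto `k`-group-sparse vectors. -/
def IsExactProj {p M : ℕ} (G : Fin M → Finset (Fin p)) (k : ℕ)
    (z w : EuclideanSpace ℝ (Fin p)) : Prop :=
  GroupSparse G k w ∧ ∀ w', GroupSparse G k w' → ‖w - z‖ ≤ ‖w' - z‖

/-- `f` satisfies restricted strong convexity / smoothness of order `k'`
with constants `α ≤ L`. -/
def RSCRSS {p M : ℕ} (G : Fin M → Finset (Fin p)) (k' : ℕ) (α L : ℝ)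
    (f : EuclideanSpace ℝ (Fin p) → ℝ) : Prop :=
  ContDiff ℝ 2 f ∧
  ∀ w : EuclideanSpace ℝ (Fin p), GroupSparse G k' w →
    ∀ v : EuclideanSpace ℝ (Fin p),
      α * ‖v‖ ^ 2 ≤ iteratedFDeriv ℝ 2 f w ![v, v] ∧
      iteratedFDeriv ℝ 2 f w ![v, v] ≤ L * ‖v‖ ^ 2

/-!
This is the max-coverage argument for greedy algorithms. Put `T = ⋃_{j ∈ A} G_j` and measure
sets by `W(S) = Σ_{i ∈ S} z_i²`. The part of `T` not yet covered by `B_j` is covered by the at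
most `k` sets `G_ℓ \ B_j`, `ℓ ∈ A`, so the greedy group gains at least `(W(T) - W(B_j)) / k`.
Hence the gap `W(T) - W(B_j)` shrinks by a factor `1 - 1/k` at every step, and
`(1 - 1/k)^m ≤ e^{-m/k}`.
-/

lemma norm_restrict_sq {p : ℕ} (z : EuclideanSpace ℝ (Fin p)) (S : Finset (Fin p)) :
    ‖restrict z S‖ ^ 2 = ∑ i ∈ S, z i ^ 2 := by
  rw [EuclideanSpace.norm_eq, Real.sq_sqrt (by positivity)]
  simp [_root_.restrict, Real.norm_eq_abs, sq_abs, ite_pow, sum_ite_mem]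

section Coverage

variable {α ι : Type*} [DecidableEq α] {w : α → ℝ}

lemma sum_union_le_of_nonneg (hw : ∀ a, 0 ≤ w a) (s t : Finset α) :
    ∑ x ∈ s ∪ t, w x ≤ ∑ x ∈ s, w x + ∑ x ∈ t, w x := by
  rw [← sum_union_inter]
  exact le_add_of_nonneg_right (sum_nonneg fun x _ => hw x)

lemma sum_biUnion_le_sum_sum_of_nonneg (hw : ∀ a, 0 ≤ w a) (A : Finset ι) (G : ι → Finset α) :
    ∑ x ∈ A.biUnion G, w x ≤ ∑ ℓ ∈ A, ∑ x ∈ G ℓ, w x := by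
  classical
  induction A using Finset.induction_on with
  | empty => simp
  | insert ℓ A hℓ ih =>
    rw [biUnion_insert, sum_insert hℓ]
    exact (sum_union_le_of_nonneg hw _ _).trans (by gcongr)

lemma sum_biUnion_sub_sum_le_card_mul (hw : ∀ a, 0 ≤ w a) (A : Finset ι) (G : ι → Finset α)
    (B S : Finset α) (hS : ∀ ℓ ∈ A, ∑ x ∈ G ℓ \ B, w x ≤ ∑ x ∈ S \ B, w x) :
    ∑ x ∈ A.biUnion G, w x - ∑ x ∈ B, w x ≤ A.card * ∑ x ∈ S \ B, w x := by
  have hcover : A.biUnion G ⊆ A.biUnion (fun ℓ => G ℓ \ B) ∪ B := by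
    intro x hx
    by_cases hxB : x ∈ B
    · exact mem_union_right _ hxB
    · obtain ⟨ℓ, hℓ, hxℓ⟩ := mem_biUnion.mp hx
      exact mem_union_left _ (mem_biUnion.mpr ⟨ℓ, hℓ, mem_sdiff.mpr ⟨hxℓ, hxB⟩⟩)
  have hbound : ∑ x ∈ A.biUnion G, w x ≤ A.card • ∑ x ∈ S \ B, w x + ∑ x ∈ B, w x :=
    calc ∑ x ∈ A.biUnion G, w x
        ≤ ∑ x ∈ A.biUnion (fun ℓ => G ℓ \ B) ∪ B, w x :=
          sum_le_sum_of_subset_of_nonneg hcover fun x _ _ => hw x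
      _ ≤ ∑ x ∈ A.biUnion (fun ℓ => G ℓ \ B), w x + ∑ x ∈ B, w x :=
          sum_union_le_of_nonneg hw _ _
      _ ≤ ∑ ℓ ∈ A, ∑ x ∈ G ℓ \ B, w x + ∑ x ∈ B, w x := by
          grw [sum_biUnion_le_sum_sum_of_nonneg hw]
      _ ≤ A.card • ∑ x ∈ S \ B, w x + ∑ x ∈ B, w x := by
          grw [sum_le_card_nsmul A _ _ hS]
  rw [nsmul_eq_mul] at hbound
  linarith

lemma sum_biUnion_sub_sum_union_le (hw : ∀ a, 0 ≤ w a) {A : Finset ι} {G : ι → Finset α}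
    {k : ℝ} (hk : 0 < k) (hA : (A.card : ℝ) ≤ k) {B S : Finset α}
    (hS : ∀ ℓ ∈ A, ∑ x ∈ G ℓ \ B, w x ≤ ∑ x ∈ S \ B, w x) :
    ∑ x ∈ A.biUnion G, w x - ∑ x ∈ B ∪ S, w x ≤
      (1 - 1 / k) * (∑ x ∈ A.biUnion G, w x - ∑ x ∈ B, w x) := by
  set gap := ∑ x ∈ A.biUnion G, w x - ∑ x ∈ B, w x
  set gain := ∑ x ∈ S \ B, w x
  have hsplit : ∑ x ∈ B ∪ S, w x = ∑ x ∈ B, w x + gain := by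
    rw [← union_sdiff_self_eq_union, sum_union disjoint_sdiff]
  have hgain : gap / k ≤ gain := by
    rw [div_le_iff₀' hk]
    exact (sum_biUnion_sub_sum_le_card_mul hw A G B S hS).trans
      (mul_le_mul_of_nonneg_right hA (sum_nonneg fun x _ => hw x))
  have hfactor : (1 - 1 / k) * gap = gap - gap / k := by ring
  rw [hsplit, hfactor]
  linarith

end Coverage

lemma partialUnion_zero {p M m : ℕ} (G : Fin M → Finset (Fin p)) (idx : Fin m → Fin M) :
    partialUnion G idx 0 = ∅ := by
  simp [partialUnion]

lemma partialUnion_succ {p M m : ℕ} (G : Fin M → Finset (Fin p)) (idx : Fin m → Fin M)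
    (j : Fin m) : partialUnion G idx (j + 1) = partialUnion G idx j ∪ G (idx j) := by
  have hsteps : univ.filter (fun t : Fin m => (t : ℕ) < j + 1) =
      insert j (univ.filter (fun t : Fin m => (t : ℕ) < j)) := by
    ext t
    simp only [mem_filter, mem_insert, mem_univ, true_and, Fin.ext_iff]
    omega
  rw [partialUnion, hsteps, biUnion_insert, union_comm]
  rfl

lemma sum_biUnion_sub_sum_partialUnion_le {p M m : ℕ} (G : Fin M → Finset (Fin p))
    (idx : Fin m → Fin M) {w : Fin p → ℝ} (hw : ∀ a, 0 ≤ w a) {A : Finset (Fin M)} {k : ℝ}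
    (hk : 1 ≤ k) (hA : (A.card : ℝ) ≤ k)
    (hgreedy : ∀ j : Fin m, ∀ ℓ ∈ A,
      ∑ x ∈ G ℓ \ partialUnion G idx j, w x ≤ ∑ x ∈ G (idx j) \ partialUnion G idx j, w x) :
    ∀ j ≤ m, ∑ x ∈ A.biUnion G, w x - ∑ x ∈ partialUnion G idx j, w x ≤
      (1 - 1 / k) ^ j * ∑ x ∈ A.biUnion G, w x
  | 0, _ => by simp [partialUnion_zero]
  | j + 1, hj => by
    have hfactor : 0 ≤ 1 - 1 / k := sub_nonneg.mpr (div_le_one_of_le₀ hk (by linarith))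
    let j' : Fin m := ⟨j, hj⟩
    calc ∑ x ∈ A.biUnion G, w x - ∑ x ∈ partialUnion G idx (j' + 1), w x
        ≤ (1 - 1 / k) * (∑ x ∈ A.biUnion G, w x - ∑ x ∈ partialUnion G idx j', w x) := by
          rw [partialUnion_succ]
          exact sum_biUnion_sub_sum_union_le hw (by linarith) hA (hgreedy j')
      _ ≤ (1 - 1 / k) * ((1 - 1 / k) ^ j * ∑ x ∈ A.biUnion G, w x) := by
          gcongr
          exact sum_biUnion_sub_sum_partialUnion_le G idx hw hk hA hgreedy j (by omega)
      _ = (1 - 1 / k) ^ (j + 1) * ∑ x ∈ A.biUnion G, w x := by ring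

lemma one_sub_one_div_pow_le_exp {k : ℝ} (hk : 1 ≤ k) (m : ℕ) :
    (1 - 1 / k) ^ m ≤ Real.exp (-(m : ℝ) / k) := by
  have hfactor : 0 ≤ 1 - 1 / k := sub_nonneg.mpr (div_le_one_of_le₀ hk (by linarith))
  calc (1 - 1 / k) ^ m
      ≤ Real.exp (-(1 / k)) ^ m := by
        gcongr
        linarith [Real.add_one_le_exp (-(1 / k))]
    _ = Real.exp (-(m : ℝ) / k) := by
        rw [← Real.exp_nat_mul]
        ring_nf

theorem stmt_1_general (p M m : ℕ)
    (G : Fin M → Finset (Fin p))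
    (z : EuclideanSpace ℝ (Fin p)) (idx : Fin m → Fin M)
    (hgreedy : IsGreedySelection G z idx)
    (k : ℕ) (hk : 1 ≤ k) (A : Finset (Fin M)) (hA : A.card ≤ k) :
    (1 - Real.exp (-(m : ℝ) / (k : ℝ))) * ∑ i ∈ A.biUnion G, (z i) ^ 2 ≤
      ∑ i ∈ partialUnion G idx m, (z i) ^ 2 := by
  have hk' : (1 : ℝ) ≤ k := by exact_mod_cast hk
  have hgreedy_sq : ∀ j : Fin m, ∀ ℓ ∈ A,
      ∑ i ∈ G ℓ \ partialUnion G idx j, z i ^ 2 ≤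
        ∑ i ∈ G (idx j) \ partialUnion G idx j, z i ^ 2 := fun j ℓ _ => by
    simpa only [norm_restrict_sq] using pow_le_pow_left₀ (norm_nonneg _) (hgreedy j ℓ) 2
  have hgap := sum_biUnion_sub_sum_partialUnion_le G idx (fun i => sq_nonneg (z i)) hk'
    (by exact_mod_cast hA) hgreedy_sq m le_rfl
  have hT : 0 ≤ ∑ i ∈ A.biUnion G, z i ^ 2 := sum_nonneg fun i _ => sq_nonneg _
  have hexp := mul_le_mul_of_nonneg_right (one_sub_one_div_pow_le_exp hk' m) hT
  linarith

/-- guarantee of the greedy selection: with `B_m = G_{i_1} ∪ ⋯ ∪ G_{i_m}`,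
for every `k ≥ 1` and every `A` with `|A| ≤ k`,
`Σ_{i ∈ B_m} z_i² ≥ (1 − e^{−m/k}) Σ_{i ∈ ∪_{j∈A} G_j} z_i²`. -/
theorem stmt_1 (p M m : ℕ) (hp : 1 ≤ p) (hM : 1 ≤ M)
    (G : Fin M → Finset (Fin p)) (hcov : ∀ i : Fin p, ∃ j : Fin M, i ∈ G j)
    (z : EuclideanSpace ℝ (Fin p)) (idx : Fin m → Fin M)
    (hgreedy : IsGreedySelection G z idx)
    (k : ℕ) (hk : 1 ≤ k) (A : Finset (Fin M)) (hA : A.card ≤ k) :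
    (1 - Real.exp (-(m : ℝ) / (k : ℝ))) * ∑ i ∈ A.biUnion G, (z i) ^ 2 ≤
      ∑ i ∈ partialUnion G idx m, (z i) ^ 2 :=
  stmt_1_general p M m G z idx hgreedy k hk A hA
end
end

section
/- Let g ∈ ℝ^p, let i_1, …, i_k be a greedy selection for g with greedy projection ŵ = g_{B_k}, and let S = supp(ŵ). Then for every I ⊆ {1, …, p} with S ⊆ I, the same sequence i_1, …, i_k is a greedy selection for the restricted vector g_I, and the greedy projection of g_I with parameter k equals ŵ. -/
open Finset

noncomputable section

/-! Restricting `g` to `I ⊇ supp ŵ` leaves it unchanged on `B_k`, which contains every newly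
covered part `G_{i_j} \ B_{j-1}` of a selected group, so the norms of the selected candidates are
unchanged while every other candidate norm can only shrink. -/

lemma restrict_restrict {p : ℕ} (z : EuclideanSpace ℝ (Fin p)) (S T : Finset (Fin p)) :
    restrict (restrict z S) T = restrict z (T ∩ S) := by
  ext i
  by_cases hT : i ∈ T <;> by_cases hS : i ∈ S <;> simp [_root_.restrict, hT, hS]

lemma suppF_restrict {p : ℕ} (z : EuclideanSpace ℝ (Fin p)) (S : Finset (Fin p)) :
    suppF (restrict z S) = suppF z ∩ S := by
  ext i
  by_cases hS : i ∈ S <;> simp [suppF, _root_.restrict, hS]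

lemma norm_restrict_mono {p : ℕ} (z : EuclideanSpace ℝ (Fin p)) {S T : Finset (Fin p)}
    (h : S ⊆ T) : ‖restrict z S‖ ≤ ‖restrict z T‖ := by
  simp only [EuclideanSpace.norm_eq, _root_.restrict]
  refine Real.sqrt_le_sqrt (Finset.sum_le_sum fun i _ => ?_)
  by_cases hS : i ∈ S
  · simp [hS, h hS]
  · rw [if_neg hS, norm_zero, sq, zero_mul]
    positivity

lemma restrict_inter_eq_of_suppF_inter_subset {p : ℕ} (z : EuclideanSpace ℝ (Fin p))
    {A I : Finset (Fin p)} (h : suppF z ∩ A ⊆ I) : restrict z (A ∩ I) = restrict z A := by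
  ext i
  by_cases hA : i ∈ A
  · by_cases hz : z i = 0
    · simp [_root_.restrict, hz]
    · have hI : i ∈ I := h (by simp [suppF, hz, hA])
      simp [_root_.restrict, hA, hI]
  · simp [_root_.restrict, hA]

lemma subset_partialUnion {p M m : ℕ} (G : Fin M → Finset (Fin p)) (idx : Fin m → Fin M)
    (j : Fin m) : G (idx j) ⊆ partialUnion G idx m := fun i hi => by
  simp only [partialUnion, mem_biUnion, mem_filter, mem_univ, true_and]
  exact ⟨j, j.isLt, hi⟩

theorem stmt_4_general (p M : ℕ)
    (G : Fin M → Finset (Fin p))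
    (g : EuclideanSpace ℝ (Fin p))
    (k : ℕ) (idx : Fin k → Fin M) (hgreedy : IsGreedySelection G g idx)
    (what : EuclideanSpace ℝ (Fin p)) (hwhat : what = restrict g (partialUnion G idx k))
    (I : Finset (Fin p)) (hI : suppF what ⊆ I) :
    IsGreedySelection G (restrict g I) idx ∧
      restrict (restrict g I) (partialUnion G idx k) = what := by
  set B := partialUnion G idx k
  have hsupp : suppF g ∩ B ⊆ I := by rwa [hwhat, suppF_restrict] at hI
  have hB : ∀ A ⊆ B, restrict (restrict g I) A = restrict g A := fun A hA => by
    rw [restrict_restrict, restrict_inter_eq_of_suppF_inter_subset]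
    exact (inter_subset_inter_left hA).trans hsupp
  refine ⟨fun j ℓ => ?_, by rw [hB B subset_rfl, hwhat]⟩
  calc ‖restrict (restrict g I) (G ℓ \ partialUnion G idx j)‖
      = ‖restrict g ((G ℓ \ partialUnion G idx j) ∩ I)‖ := by rw [restrict_restrict]
    _ ≤ ‖restrict g (G ℓ \ partialUnion G idx j)‖ := norm_restrict_mono g inter_subset_left
    _ ≤ ‖restrict g (G (idx j) \ partialUnion G idx j)‖ := hgreedy j ℓ
    _ = ‖restrict (restrict g I) (G (idx j) \ partialUnion G idx j)‖ := by
      rw [hB _ (sdiff_subset.trans (subset_partialUnion G idx j))]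

/-- Lemma `subset` of the paper: if `ŵ = g_{B_k}` is the greedy projection
of `g` with support `S`, then for every `I ⊇ S`, the same index sequence is a greedy
selection for `g_I` and the greedy projection of `g_I` with parameter `k` equals `ŵ`. -/
theorem stmt_4 (p M : ℕ) (hp : 1 ≤ p) (hM : 1 ≤ M)
    (G : Fin M → Finset (Fin p)) (hcov : ∀ i : Fin p, ∃ j : Fin M, i ∈ G j)
    (g : EuclideanSpace ℝ (Fin p))
    (k : ℕ) (idx : Fin k → Fin M) (hgreedy : IsGreedySelection G g idx)
    (what : EuclideanSpace ℝ (Fin p)) (hwhat : what = restrict g (partialUnion G idx k))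
    (I : Finset (Fin p)) (hI : suppF what ⊆ I) :
    IsGreedySelection G (restrict g I) idx ∧
      restrict (restrict g I) (partialUnion G idx k) = what :=
  stmt_4_general p M G g k idx hgreedy what hwhat I hI
end
end

section
/- Let z ∈ ℝ^p and let 1 ≤ k* ≤ k ≤ M with k* < M. Let ŵ = P_k^𝒢(z) and w* = P_{k*}^𝒢(z) be exact projections of z onto k-group-sparse and k*-group-sparse vectors respectively. Then ‖ŵ − z‖² ≤ ((M − k)/(M − k*)) · ‖w* − z‖². -/
open Finset

noncomputable section

/-!
Enlarge the groups supporting `w*` to a set `A` of exactly `k*` groups, and assign every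
coordinate to one group containing it. The coordinates left uncovered by `A` carry a mass
`∑ z_i² ≤ ‖w* - z‖²`, which the assignment splits among the `M - k*` groups outside `A`.
The `k - k*` of those groups carrying the most mass hold at least a `(k - k*)/(M - k*)`
fraction of it, so restricting `z` to `A` together with them is a `k`-group-sparse competitor
whose residual is at most `(M - k)/(M - k*) · ‖w* - z‖²`.
-/

theorem Finset.exists_subset_card_eq_mul_sum_le {ι : Type*} [DecidableEq ι] (f : ι → ℝ)
    (C : Finset ι) {t : ℕ} (ht : t ≤ #C) :
    ∃ T ⊆ C, #T = t ∧ t * ∑ j ∈ C, f j ≤ #C * ∑ j ∈ T, f j := by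
  induction t with
  | zero => exact ⟨∅, empty_subset _, rfl, by simp⟩
  | succ t ih =>
    obtain ⟨T, hTC, rfl, hT⟩ := ih (by omega)
    obtain ⟨j, hj, hmax⟩ := exists_max_image (C \ T) f
      (by rw [← card_pos, card_sdiff_of_subset hTC]; omega)
    have hjT : j ∉ T := (mem_sdiff.mp hj).2
    have hrest : ∑ i ∈ C, f i - ∑ i ∈ T, f i ≤ (#C - #T) * f j := by
      rw [← sum_sdiff_eq_sub hTC, ← Nat.cast_sub (card_le_card hTC), ← card_sdiff_of_subset hTC,
        ← nsmul_eq_mul, ← sum_const]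
      exact sum_le_sum hmax
    refine ⟨insert j T, insert_subset (mem_sdiff.mp hj).1 hTC, card_insert_of_notMem hjT, ?_⟩
    have hlt : (#T : ℝ) + 1 ≤ #C := by exact_mod_cast ht
    rw [sum_insert hjT]
    push_cast
    nlinarith [mul_le_mul_of_nonneg_left hT (by linarith : (0 : ℝ) ≤ #C - #T - 1),
      mul_le_mul_of_nonneg_left hrest (by linarith : (0 : ℝ) ≤ #C)]

theorem Finset.exists_card_mul_sum_compl_biUnion_le {α ι : Type*} [Fintype α] [DecidableEq α]
    [Fintype ι] [DecidableEq ι] (G : ι → Finset α) (hcov : ∀ i, ∃ j, i ∈ G j)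
    (f : α → ℝ) (hf : ∀ i, 0 ≤ f i) (A : Finset ι) {t : ℕ} (ht : t ≤ #Aᶜ) :
    ∃ T ⊆ Aᶜ, #T = t ∧
      (#Aᶜ : ℝ) * ∑ i ∈ ((A ∪ T).biUnion G)ᶜ, f i ≤
        ((#Aᶜ : ℝ) - t) * ∑ i ∈ (A.biUnion G)ᶜ, f i := by
  choose c hc using hcov
  set m : ι → ℝ := fun j => ∑ i ∈ (A.biUnion G)ᶜ with c i = j, f i
  have hc_notMem {B : Finset ι} {i : α} (hi : i ∈ (B.biUnion G)ᶜ) : c i ∉ B := fun h =>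
    mem_compl.mp hi (mem_biUnion.mpr ⟨c i, h, hc i⟩)
  have htotal : ∑ j ∈ Aᶜ, m j = ∑ i ∈ (A.biUnion G)ᶜ, f i :=
    sum_fiberwise_of_maps_to (fun i hi => mem_compl.mpr (hc_notMem hi)) f
  obtain ⟨T, hTA, rfl, hT⟩ := exists_subset_card_eq_mul_sum_le m Aᶜ ht
  refine ⟨T, hTA, rfl, ?_⟩
  have hrest : ∑ i ∈ ((A ∪ T).biUnion G)ᶜ, f i ≤ ∑ j ∈ Aᶜ \ T, m j := by
    rw [← sum_fiberwise_of_maps_to (s := ((A ∪ T).biUnion G)ᶜ) (t := Aᶜ \ T) (g := c)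
      (fun i hi => by simpa [not_or] using hc_notMem hi)]
    refine sum_le_sum fun j _ => sum_le_sum_of_subset_of_nonneg ?_ fun i _ _ => hf i
    exact filter_subset_filter _ (compl_subset_compl.mpr (biUnion_subset_biUnion_of_subset_left
      G subset_union_left))
  rw [← htotal, ← sum_sdiff hTA]
  rw [← sum_sdiff hTA] at hT
  have hA : (#T : ℝ) ≤ #Aᶜ := by exact_mod_cast card_le_card hTA
  linarith [mul_le_mul_of_nonneg_left hrest (by positivity : (0 : ℝ) ≤ #Aᶜ)]

lemma suppF_restrict_subset {p : ℕ} (z : EuclideanSpace ℝ (Fin p)) (S : Finset (Fin p)) :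
    suppF (restrict z S) ⊆ S := by
  intro i hi
  by_contra h
  simp [suppF, _root_.restrict, h] at hi

lemma norm_restrict_sub_sq {p : ℕ} (z : EuclideanSpace ℝ (Fin p)) (S : Finset (Fin p)) :
    ‖restrict z S - z‖ ^ 2 = ∑ i ∈ Sᶜ, z i ^ 2 := by
  rw [EuclideanSpace.real_norm_sq_eq, ← sum_add_sum_compl S]
  have hS : ∀ i ∈ S, (restrict z S - z) i ^ 2 = 0 := fun i hi => by simp [_root_.restrict, hi]
  have hSc : ∀ i ∈ Sᶜ, (restrict z S - z) i ^ 2 = z i ^ 2 := fun i hi => by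
    simp [_root_.restrict, mem_compl.mp hi]
  rw [sum_eq_zero hS, sum_congr rfl hSc, zero_add]

lemma sum_compl_sq_le_norm_sub_sq {p : ℕ} {z w : EuclideanSpace ℝ (Fin p)} {B : Finset (Fin p)}
    (hw : suppF w ⊆ B) : ∑ i ∈ Bᶜ, z i ^ 2 ≤ ‖w - z‖ ^ 2 := by
  rw [EuclideanSpace.real_norm_sq_eq]
  calc ∑ i ∈ Bᶜ, z i ^ 2 = ∑ i ∈ Bᶜ, (w - z) i ^ 2 := sum_congr rfl fun i hi => by
        have hwi : w i = 0 := by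
          by_contra h
          exact mem_compl.mp hi (hw (by simp [suppF, h]))
        simp [hwi]
    _ ≤ ∑ i, (w - z) i ^ 2 :=
        sum_le_sum_of_subset_of_nonneg (subset_univ _) fun i _ _ => sq_nonneg _

theorem stmt_5_general (p M : ℕ)
    (G : Fin M → Finset (Fin p)) (hcov : ∀ i : Fin p, ∃ j : Fin M, i ∈ G j)
    (z : EuclideanSpace ℝ (Fin p))
    (kstar k : ℕ) (h2 : kstar ≤ k) (h3 : k ≤ M) (h4 : kstar < M)
    (what : EuclideanSpace ℝ (Fin p)) (hwhat : IsExactProj G k z what)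
    (wstar : EuclideanSpace ℝ (Fin p)) (hwstar : IsExactProj G kstar z wstar) :
    ‖what - z‖ ^ 2 ≤ (((M : ℝ) - (k : ℝ)) / ((M : ℝ) - (kstar : ℝ))) * ‖wstar - z‖ ^ 2 := by
  obtain ⟨⟨A₀, hA₀, hsupp⟩, -⟩ := hwstar
  obtain ⟨A, hA₀A, -, hA⟩ :=
    exists_subsuperset_card_eq (subset_univ A₀) hA₀ (by simpa using h4.le)
  have hAc : #Aᶜ = M - kstar := by rw [card_compl, hA, Fintype.card_fin]
  obtain ⟨T, -, hT, hcover⟩ := exists_card_mul_sum_compl_biUnion_le G hcov (fun i => z i ^ 2)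
    (fun i => sq_nonneg _) A (t := k - kstar) (by omega)
  have hwhat_le : ‖what - z‖ ^ 2 ≤ ∑ i ∈ ((A ∪ T).biUnion G)ᶜ, z i ^ 2 := by
    have hsparse : GroupSparse G k (restrict z ((A ∪ T).biUnion G)) :=
      ⟨A ∪ T, (card_union_le _ _).trans (by omega), suppF_restrict_subset _ _⟩
    rw [← norm_restrict_sub_sq]
    exact pow_le_pow_left₀ (norm_nonneg _) (hwhat.2 _ hsparse) 2
  have hwstar_ge : ∑ i ∈ (A.biUnion G)ᶜ, z i ^ 2 ≤ ‖wstar - z‖ ^ 2 :=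
    sum_compl_sq_le_norm_sub_sq (hsupp.trans (biUnion_subset_biUnion_of_subset_left G hA₀A))
  rw [hAc, Nat.cast_sub h4.le, Nat.cast_sub h2] at hcover
  have hpos : (0 : ℝ) < M - kstar := sub_pos.mpr (by exact_mod_cast h4)
  have hkM : (k : ℝ) ≤ M := by exact_mod_cast h3
  rw [div_mul_eq_mul_div, le_div_iff₀ hpos]
  calc ‖what - z‖ ^ 2 * (M - kstar)
      ≤ (M - kstar) * ∑ i ∈ ((A ∪ T).biUnion G)ᶜ, z i ^ 2 := by
        rw [mul_comm]; exact mul_le_mul_of_nonneg_left hwhat_le hpos.le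
    _ ≤ (M - k) * ∑ i ∈ (A.biUnion G)ᶜ, z i ^ 2 := by linarith
    _ ≤ (M - k) * ‖wstar - z‖ ^ 2 := mul_le_mul_of_nonneg_left hwstar_ge (by linarith)

/-- Lemma `ht_large` of the paper: for exact projections `ŵ = P_k^𝒢(z)`
and `w* = P_{k*}^𝒢(z)` with `1 ≤ k* ≤ k ≤ M` and `k* < M`,
`‖ŵ − z‖² ≤ ((M − k)/(M − k*)) ‖w* − z‖²`. -/
theorem stmt_5 (p M : ℕ) (hp : 1 ≤ p) (hM : 1 ≤ M)
    (G : Fin M → Finset (Fin p)) (hcov : ∀ i : Fin p, ∃ j : Fin M, i ∈ G j)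
    (z : EuclideanSpace ℝ (Fin p))
    (kstar k : ℕ) (h1 : 1 ≤ kstar) (h2 : kstar ≤ k) (h3 : k ≤ M) (h4 : kstar < M)
    (what : EuclideanSpace ℝ (Fin p)) (hwhat : IsExactProj G k z what)
    (wstar : EuclideanSpace ℝ (Fin p)) (hwstar : IsExactProj G kstar z wstar) :
    ‖what - z‖ ^ 2 ≤ (((M : ℝ) - (k : ℝ)) / ((M : ℝ) - (kstar : ℝ))) * ‖wstar - z‖ ^ 2 :=
  stmt_5_general p M G hcov z kstar k h2 h3 h4 what hwhat wstar hwstar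
end
end
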